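/- arXiv:2511.00667 — 4 statements merged into one kernel-verified Lean document; each statement's English description precedes it below -/
import Mathlib

section
/- For all real numbers a, b with 0 < a < b < 1, the inequality (arcsin(b) - arcsin(a)) · (b³√(1-b²) - a³√(1-a²)) < (b² - a²)² holds. -/
theorem arcsin_sqrt_inequality (a b : ℝ) (ha : 0 < a) (hab : a < b) (hb : b < 1) :
    (Real.arcsin b - Real.arcsin a) *
      (b ^ 3 * Real.sqrt (1 - b ^ 2) - a ^ 3 * Real.sqrt (1 - a ^ 2)) <
    (b ^ 2 - a ^ 2) ^ 2 := by
  set c := Real.sqrt (1 - b ^ 2) with hc_def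
  set pa := Real.sqrt (1 - a ^ 2) with hpa_def
  have hb0 : 0 < b := ha.trans hab
  have h1b2 : 0 < 1 - b ^ 2 := by nlinarith
  have h1a2 : 0 < 1 - a ^ 2 := by nlinarith
  have hc : 0 < c := Real.sqrt_pos.mpr h1b2
  have hpa : 0 < pa := Real.sqrt_pos.mpr h1a2
  have hcpa : c < pa := by
    apply Real.sqrt_lt_sqrt h1b2.le
    nlinarith
  -- arcsin difference is positive
  have hD : 0 < Real.arcsin b - Real.arcsin a := by
    have := Real.strictMonoOn_arcsin (Set.mem_Icc.mpr ⟨by linarith, by linarith⟩)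
      (Set.mem_Icc.mpr ⟨by linarith, by linarith⟩) hab
    linarith
  -- key bound: c * (arcsin b - arcsin a) ≤ b - a
  have key : c * (Real.arcsin b - Real.arcsin a) ≤ b - a := by
    have hmono : MonotoneOn (fun x => x - c * Real.arcsin x) (Set.Icc a b) := by
      apply monotoneOn_of_deriv_nonneg (convex_Icc a b)
      · exact (continuous_id.sub (continuous_const.mul Real.continuous_arcsin)).continuousOn
      · intro x hx
        rw [interior_Icc] at hx
        have hx1 : x ≠ 1 := by intro h; rw [h] at hx; linarith [hx.2]
        have hxm1 : x ≠ -1 := by intro h; rw [h] at hx; linarith [hx.1]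
        exact (differentiableAt_id.sub (((Real.differentiableAt_arcsin.mpr
          ⟨hxm1, hx1⟩).const_mul c))).differentiableWithinAt
      · intro x hx
        rw [interior_Icc] at hx
        have hx1 : x ≠ 1 := by intro h; rw [h] at hx; linarith [hx.2]
        have hxm1 : x ≠ -1 := by intro h; rw [h] at hx; linarith [hx.1]
        have hd : HasDerivAt (fun x => x - c * Real.arcsin x)
            (1 - c * (1 / Real.sqrt (1 - x ^ 2))) x :=
          (hasDerivAt_id x).sub ((Real.hasDerivAt_arcsin hxm1 hx1).const_mul c)
        rw [hd.deriv]
        have hsx : 0 < Real.sqrt (1 - x ^ 2) := by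
          apply Real.sqrt_pos.mpr; nlinarith [hx.1, hx.2, ha, hb]
        have hcs : c ≤ Real.sqrt (1 - x ^ 2) := by
          apply Real.sqrt_le_sqrt
          nlinarith [hx.1, hx.2, mul_pos (sub_pos.mpr hx.2)
            (show (0:ℝ) < b + x by nlinarith [hx.1])]
        have : c * (1 / Real.sqrt (1 - x ^ 2)) ≤ 1 := by
          rw [mul_one_div, div_le_one hsx]; exact hcs
        linarith
    have := hmono (Set.left_mem_Icc.mpr hab.le) (Set.right_mem_Icc.mpr hab.le) hab.le
    simp only at this
    nlinarith [this]
  -- case split on sign of the second factor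
  rcases le_or_gt (b ^ 3 * c - a ^ 3 * pa) 0 with hG | hG
  · have hR : 0 < (b ^ 2 - a ^ 2) ^ 2 := by
      have h : 0 < b ^ 2 - a ^ 2 := by nlinarith
      exact pow_pos h 2
    nlinarith [mul_nonneg hD.le (neg_nonneg.mpr hG)]
  · -- second factor bound: b^3*c - a^3*pa < (b^3 - a^3) * c
    have hG2 : b ^ 3 * c - a ^ 3 * pa < (b ^ 3 - a ^ 3) * c := by
      have : a ^ 3 * c < a ^ 3 * pa := by
        apply mul_lt_mul_of_pos_left hcpa (by positivity)
      nlinarith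
    have hba3 : 0 < b ^ 3 - a ^ 3 := by nlinarith
    -- combine: D * G < (b-a)*(b^3-a^3) ≤ (b^2-a^2)^2
    nlinarith [mul_lt_mul_of_pos_left hG2 hD, mul_le_mul_of_nonneg_right key hG.le,
      mul_pos hD hG, mul_pos ha hb0, sq_nonneg (b - a)]
end

section
/- Let t > 0 and define ψ_t(ζ) = arctan(t - ζ) + arctan(ζ) for ζ ∈ ℝ. Then for all ζ ∈ ℝ, ψ_t''(ζ) · ψ_t(ζ) < 2 · (ψ_t'(ζ))², i.e. 1/ψ_t is strictly convex. -/
/-!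
Write `x = ζ`, `y = t - ζ`, `s = x + y = t` and `ψ = arctan x + arctan y > 0`. After clearing the
denominators `(1 + x²)²(1 + y²)²` the inequality becomes `-S ψ < s² (y - x)²` with
`S = x (1 + y²)² + y (1 + x²)²`, and `S = s ((1 - xy)² + s²) - s (y - x)² (1 - xy)` identically.
So it suffices that `(1 - xy) ψ < s`: for `xy < 1` this is the addition formula
`ψ = arctan (s / (1 - xy))` together with `arctan u < u` for `u > 0`, and for `xy ≥ 1` the left
side is not positive.
-/

open Real

lemma Real.arctan_lt_self {x : ℝ} (hx : 0 < x) : arctan x < x := by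
  simpa using lt_tan (arctan_pos.2 hx) (arctan_lt_pi_div_two x)

lemma Real.arctan_add_arctan_pos {x y : ℝ} (h : 0 < x + y) : 0 < arctan x + arctan y := by
  have := arctan_strictMono (show -y < x by linarith)
  rw [arctan_neg] at this
  linarith

lemma Real.one_sub_mul_mul_arctan_add_arctan_lt {x y : ℝ} (h : 0 < x + y) :
    (1 - x * y) * (arctan x + arctan y) < x + y := by
  rcases lt_or_ge (x * y) 1 with hxy | hxy
  · have hD : 0 < 1 - x * y := by linarith
    rw [arctan_add hxy, ← lt_div_iff₀' hD]
    exact arctan_lt_self (div_pos h hD)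
  · nlinarith [arctan_add_arctan_pos h]

lemma Real.neg_mul_arctan_add_arctan_lt {x y : ℝ} (h : 0 < x + y) :
    -(x * (1 + y ^ 2) ^ 2 + y * (1 + x ^ 2) ^ 2) * (arctan x + arctan y)
      < (x + y) ^ 2 * (y - x) ^ 2 := by
  have key : x * (1 + y ^ 2) ^ 2 + y * (1 + x ^ 2) ^ 2
      = (x + y) * ((1 - x * y) ^ 2 + (x + y) ^ 2) - (x + y) * (y - x) ^ 2 * (1 - x * y) := by
    ring
  have h_bound := mul_le_mul_of_nonneg_left (one_sub_mul_mul_arctan_add_arctan_lt h).le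
    (by positivity : 0 ≤ (x + y) * (y - x) ^ 2)
  have h_pos := mul_pos (by positivity : 0 < (x + y) * ((1 - x * y) ^ 2 + (x + y) ^ 2))
    (arctan_add_arctan_pos h)
  rw [key]
  nlinarith

lemma Real.second_deriv_mul_arctan_add_arctan_lt {x y : ℝ} (h : 0 < x + y) :
    (-(2 * x) / (1 + x ^ 2) ^ 2 - 2 * y / (1 + y ^ 2) ^ 2) * (arctan x + arctan y)
      < 2 * (1 / (1 + x ^ 2) - 1 / (1 + y ^ 2)) ^ 2 := by
  have h_clear : 2 * (1 / (1 + x ^ 2) - 1 / (1 + y ^ 2)) ^ 2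
      - (-(2 * x) / (1 + x ^ 2) ^ 2 - 2 * y / (1 + y ^ 2) ^ 2) * (arctan x + arctan y)
      = 2 * ((x + y) ^ 2 * (y - x) ^ 2
        + (x * (1 + y ^ 2) ^ 2 + y * (1 + x ^ 2) ^ 2) * (arctan x + arctan y))
        / ((1 + x ^ 2) ^ 2 * (1 + y ^ 2) ^ 2) := by
    field_simp
    ring
  rw [← sub_pos, h_clear]
  exact div_pos (by linarith [neg_mul_arctan_add_arctan_lt h]) (by positivity)

lemma hasDerivAt_one_div_one_add_sq (x : ℝ) :
    HasDerivAt (fun x : ℝ => 1 / (1 + x ^ 2)) (-(2 * x) / (1 + x ^ 2) ^ 2) x := by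
  simpa [one_div, Pi.inv_def] using ((hasDerivAt_pow 2 x).const_add 1).inv (by positivity)

lemma hasDerivAt_arctan_sub_add_arctan (t ζ : ℝ) :
    HasDerivAt (fun ζ => arctan (t - ζ) + arctan ζ)
      (1 / (1 + ζ ^ 2) - 1 / (1 + (t - ζ) ^ 2)) ζ := by
  have : HasDerivAt (fun ζ => arctan (t - ζ) + arctan ζ) _ ζ :=
    ((hasDerivAt_id' ζ).const_sub t).arctan.add (hasDerivAt_arctan ζ)
  convert this using 1
  ring

lemma deriv_deriv_arctan_sub_add_arctan (t ζ : ℝ) :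
    deriv (deriv (fun ζ => arctan (t - ζ) + arctan ζ)) ζ
      = -(2 * ζ) / (1 + ζ ^ 2) ^ 2 - 2 * (t - ζ) / (1 + (t - ζ) ^ 2) ^ 2 := by
  have h : HasDerivAt (fun ζ => 1 / (1 + ζ ^ 2) - 1 / (1 + (t - ζ) ^ 2)) _ ζ :=
    (hasDerivAt_one_div_one_add_sq ζ).sub
      ((hasDerivAt_one_div_one_add_sq (t - ζ)).comp ζ ((hasDerivAt_id' ζ).const_sub t))
  rw [funext fun ζ => (hasDerivAt_arctan_sub_add_arctan t ζ).deriv, h.deriv]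
  ring

theorem reciprocal_psi_strictly_convex (t : ℝ) (ht : 0 < t) :
    ∀ ζ : ℝ,
      deriv (deriv (fun ζ : ℝ => Real.arctan (t - ζ) + Real.arctan ζ)) ζ *
        (Real.arctan (t - ζ) + Real.arctan ζ) <
      2 * (deriv (fun ζ : ℝ => Real.arctan (t - ζ) + Real.arctan ζ) ζ) ^ 2 := by
  intro ζ
  rw [deriv_deriv_arctan_sub_add_arctan, (hasDerivAt_arctan_sub_add_arctan t ζ).deriv,
    add_comm (arctan (t - ζ))]
  exact second_deriv_mul_arctan_add_arctan_lt (by linarith)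
end

section
/- Let t > 0, h_t(θ) = csc(θ)·ψ_t(cot θ) with ψ_t(ζ) = arctan(t-ζ) + arctan(ζ). Then for θ ∈ (0, π): h_t(θ)² + 2 h_t'(θ)² - h_t''(θ) h_t(θ) = csc⁶(θ) · (2 ψ_t'(cot θ)² - ψ_t(cot θ)·ψ_t''(cot θ)). -/
/-!
Write `h = ψ(cot θ) · csc θ`. Since `cot' = -csc²` and `csc' = -cot · csc`, every function of the
form `φ(cot θ) · cscⁿ θ` differentiates to `-φ'(cot θ) cscⁿ⁺² θ - n · (cot θ · φ(cot θ)) cscⁿ θ`,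
again a sum of functions of this form. Two applications give `h'` and `h''` in terms of
`ψ, ψ', ψ''` at `cot θ`, and in `h² + 2h'² - h''h` the cross terms cancel by `csc² = 1 + cot²`.
-/

open Real Topology

theorem curvature_combination_eq {s c p p₁ p₂ : ℝ} (hs : s⁻¹ ^ 2 = 1 + c ^ 2) :
    (p / s) ^ 2 + 2 * (-(p₁ * s⁻¹ ^ 3) - c * p * s⁻¹) ^ 2 -
      (p₂ * s⁻¹ ^ 5 + 4 * c * p₁ * s⁻¹ ^ 3 + (s⁻¹ ^ 3 + c ^ 2 * s⁻¹) * p) * (p / s) =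
    s⁻¹ ^ 6 * (2 * p₁ ^ 2 - p * p₂) := by
  linear_combination (-s⁻¹ ^ 2 * p ^ 2) * hs

section

variable {θ : ℝ}

theorem hasDerivAt_cos_div_sin (hs : sin θ ≠ 0) :
    HasDerivAt (fun x => cos x / sin x) (-(sin θ)⁻¹ ^ 2) θ := by
  refine ((hasDerivAt_cos θ).div (hasDerivAt_sin θ) hs).congr_deriv ?_
  field_simp
  linear_combination (-1) * sin_sq_add_cos_sq θ

theorem hasDerivAt_inv_sin_pow (n : ℕ) (hs : sin θ ≠ 0) :
    HasDerivAt (fun x => (sin x)⁻¹ ^ n) (-(n * (cos θ / sin θ) * (sin θ)⁻¹ ^ n)) θ := by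
  refine (((hasDerivAt_sin θ).inv hs).pow n).congr_deriv ?_
  rcases n with _ | n
  · simp
  · rw [Nat.add_sub_cancel, Pi.inv_apply, pow_succ]
    ring

theorem hasDerivAt_comp_cos_div_sin_mul_inv_sin_pow {φ : ℝ → ℝ} {φ' : ℝ} (n : ℕ)
    (hφ : HasDerivAt φ φ' (cos θ / sin θ)) (hs : sin θ ≠ 0) :
    HasDerivAt (fun x => φ (cos x / sin x) * (sin x)⁻¹ ^ n)
      (-(φ' * (sin θ)⁻¹ ^ (n + 2)) -
        n * (cos θ / sin θ * φ (cos θ / sin θ)) * (sin θ)⁻¹ ^ n) θ := by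
  refine ((hφ.comp θ (hasDerivAt_cos_div_sin hs)).mul
    (hasDerivAt_inv_sin_pow n hs)).congr_deriv ?_
  rw [Function.comp_apply]
  ring

theorem hasDerivAt_comp_cos_div_sin_div_sin {ψ : ℝ → ℝ} {ψ' : ℝ}
    (hψ : HasDerivAt ψ ψ' (cos θ / sin θ)) (hs : sin θ ≠ 0) :
    HasDerivAt (fun x => ψ (cos x / sin x) / sin x)
      (-(ψ' * (sin θ)⁻¹ ^ 3) - cos θ / sin θ * ψ (cos θ / sin θ) * (sin θ)⁻¹) θ := by
  convert hasDerivAt_comp_cos_div_sin_mul_inv_sin_pow 1 hψ hs using 1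
  · funext x
    ring
  · push_cast
    ring

theorem deriv_deriv_comp_cos_div_sin_div_sin {ψ : ℝ → ℝ} (hψ : ContDiff ℝ 2 ψ)
    (hs : sin θ ≠ 0) :
    deriv (deriv fun x => ψ (cos x / sin x) / sin x) θ =
      deriv (deriv ψ) (cos θ / sin θ) * (sin θ)⁻¹ ^ 5 +
        4 * (cos θ / sin θ) * deriv ψ (cos θ / sin θ) * (sin θ)⁻¹ ^ 3 +
        ((sin θ)⁻¹ ^ 3 + (cos θ / sin θ) ^ 2 * (sin θ)⁻¹) * ψ (cos θ / sin θ) := by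
  obtain ⟨hψ₁, -, hψ₂⟩ := (contDiff_succ_iff_deriv (n := 1)).mp hψ
  replace hψ₂ := hψ₂.differentiable one_ne_zero
  have h_deriv : deriv (fun x => ψ (cos x / sin x) / sin x) =ᶠ[𝓝 θ]
      fun x => -(deriv ψ (cos x / sin x) * (sin x)⁻¹ ^ 3) -
        cos x / sin x * ψ (cos x / sin x) * (sin x)⁻¹ := by
    filter_upwards [(isOpen_ne_fun continuous_sin continuous_const).mem_nhds hs] with x hx
    exact (hasDerivAt_comp_cos_div_sin_div_sin (hψ₁ _).hasDerivAt hx).deriv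
  have h₁ := hasDerivAt_comp_cos_div_sin_mul_inv_sin_pow 3 (hψ₂ (cos θ / sin θ)).hasDerivAt hs
  have h₂ := hasDerivAt_comp_cos_div_sin_mul_inv_sin_pow (φ := fun ζ => ζ * ψ ζ) 1
    ((hasDerivAt_id' (cos θ / sin θ)).mul (hψ₁ (cos θ / sin θ)).hasDerivAt) hs
  rw [h_deriv.deriv_eq]
  convert (h₁.neg.sub h₂).deriv using 1
  · congr 1
    funext x
    simp only [Pi.sub_apply, Pi.neg_apply]
    ring
  · push_cast
    ring

theorem curvature_combination_comp_cos_div_sin_div_sin (ψ : ℝ → ℝ) (hψ : ContDiff ℝ 2 ψ)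
    (hs : sin θ ≠ 0) :
    (ψ (cos θ / sin θ) / sin θ) ^ 2 +
        2 * (deriv (fun x => ψ (cos x / sin x) / sin x) θ) ^ 2 -
        deriv (deriv fun x => ψ (cos x / sin x) / sin x) θ * (ψ (cos θ / sin θ) / sin θ) =
      (sin θ)⁻¹ ^ 6 * (2 * deriv ψ (cos θ / sin θ) ^ 2 -
        ψ (cos θ / sin θ) * deriv (deriv ψ) (cos θ / sin θ)) := by
  have hcsc : (sin θ)⁻¹ ^ 2 = 1 + (cos θ / sin θ) ^ 2 := by
    field_simp
    linear_combination (-1) * sin_sq_add_cos_sq θ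
  rw [(hasDerivAt_comp_cos_div_sin_div_sin ((hψ.differentiable two_ne_zero) _).hasDerivAt
    hs).deriv, deriv_deriv_comp_cos_div_sin_div_sin hψ hs]
  exact curvature_combination_eq hcsc

end

theorem h_t_curvature_combination_general (t : ℝ) (θ : ℝ)
    (hθ : θ ∈ Set.Ioo 0 Real.pi) :
    ((Real.arctan (t - Real.cos θ / Real.sin θ) +
        Real.arctan (Real.cos θ / Real.sin θ)) / Real.sin θ) ^ 2 +
      2 * (deriv (fun θ : ℝ => (Real.arctan (t - Real.cos θ / Real.sin θ) +
          Real.arctan (Real.cos θ / Real.sin θ)) / Real.sin θ) θ) ^ 2 -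
      deriv (deriv (fun θ : ℝ => (Real.arctan (t - Real.cos θ / Real.sin θ) +
          Real.arctan (Real.cos θ / Real.sin θ)) / Real.sin θ)) θ *
        ((Real.arctan (t - Real.cos θ / Real.sin θ) +
          Real.arctan (Real.cos θ / Real.sin θ)) / Real.sin θ) =
    ((Real.sin θ)⁻¹) ^ 6 *
      (2 * (deriv (fun ζ : ℝ => Real.arctan (t - ζ) + Real.arctan ζ)
          (Real.cos θ / Real.sin θ)) ^ 2 -
        (Real.arctan (t - Real.cos θ / Real.sin θ) +
            Real.arctan (Real.cos θ / Real.sin θ)) *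
          deriv (deriv (fun ζ : ℝ => Real.arctan (t - ζ) + Real.arctan ζ))
            (Real.cos θ / Real.sin θ)) := by
  exact curvature_combination_comp_cos_div_sin_div_sin (fun ζ => arctan (t - ζ) + arctan ζ)
    ((contDiff_arctan.comp (contDiff_const.sub contDiff_id)).add contDiff_arctan)
    (sin_pos_of_pos_of_lt_pi hθ.1 hθ.2).ne'

theorem h_t_curvature_combination (t : ℝ) (ht : 0 < t) (θ : ℝ)
    (hθ : θ ∈ Set.Ioo 0 Real.pi) :
    ((Real.arctan (t - Real.cos θ / Real.sin θ) +
        Real.arctan (Real.cos θ / Real.sin θ)) / Real.sin θ) ^ 2 +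
      2 * (deriv (fun θ : ℝ => (Real.arctan (t - Real.cos θ / Real.sin θ) +
          Real.arctan (Real.cos θ / Real.sin θ)) / Real.sin θ) θ) ^ 2 -
      deriv (deriv (fun θ : ℝ => (Real.arctan (t - Real.cos θ / Real.sin θ) +
          Real.arctan (Real.cos θ / Real.sin θ)) / Real.sin θ)) θ *
        ((Real.arctan (t - Real.cos θ / Real.sin θ) +
          Real.arctan (Real.cos θ / Real.sin θ)) / Real.sin θ) =
    ((Real.sin θ)⁻¹) ^ 6 *
      (2 * (deriv (fun ζ : ℝ => Real.arctan (t - ζ) + Real.arctan ζ)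
          (Real.cos θ / Real.sin θ)) ^ 2 -
        (Real.arctan (t - Real.cos θ / Real.sin θ) +
            Real.arctan (Real.cos θ / Real.sin θ)) *
          deriv (deriv (fun ζ : ℝ => Real.arctan (t - ζ) + Real.arctan ζ))
            (Real.cos θ / Real.sin θ)) :=
  h_t_curvature_combination_general t θ hθ
end

section
/- Let t ≥ 2 and define the rescaled phase h̃_t(σ) = h_t(1/t + σ/t²)/t where h_t(θ) = [arctan(t - cot θ) + arctan(cot θ)]/sin θ. Then for each fixed σ ∈ ℝ, h̃_t(σ) → π/2 + arctan(σ) as t → ∞; moreover, on any compact interval [-1/δ, 1/δ] the convergence is uniform with rate O_δ(1/t). -/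
/-!
Along the ray `θ = 1/t + σ/t²` one has `1/θ = t - σ + σ²/(t + σ)`, so the small-angle bounds
`1/θ - θ/2 ≤ cot θ ≤ 1/θ` and `θ - θ³/6 ≤ sin θ ≤ θ` give `t - cot θ = σ + O(1/t)` and
`t sin θ = 1 + O(1/t)`. Since `arctan` is 1-Lipschitz and `π/2 - arctan x ≤ 1/x`, the numerator is
`π/2 + arctan σ + O(1/t)`, and replacing `sin θ` by `1/t` in the denominator costs another `O(1/t)`.
For bounded `t` the addition formula for `arctan` bounds the phase by `2πt` at every angle.
-/

open Real Filter

noncomputable def phase (t θ : ℝ) : ℝ :=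
  (arctan (t - cos θ / sin θ) + arctan (cos θ / sin θ)) / sin θ

lemma lipschitzWith_one_arctan : LipschitzWith 1 arctan :=
  lipschitzWith_of_nnnorm_deriv_le differentiable_arctan fun x => by
    rw [← NNReal.coe_le_coe, coe_nnnorm, Real.deriv_arctan, NNReal.coe_one, norm_eq_abs,
      abs_of_pos (by positivity)]
    exact div_le_one_of_le₀ (by nlinarith [sq_nonneg x]) (by positivity)

lemma abs_arctan_sub_arctan_le (x y : ℝ) : |arctan x - arctan y| ≤ |x - y| := by
  simpa [dist_eq] using lipschitzWith_one_arctan.dist_le_mul x y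

lemma abs_arctan_le (x : ℝ) : |arctan x| ≤ |x| := by
  simpa using abs_arctan_sub_arctan_le x 0

lemma pi_div_two_sub_arctan_le {x : ℝ} (hx : 0 < x) : π / 2 - arctan x ≤ 1 / x := by
  rw [← arctan_inv_of_pos hx, one_div]
  exact (le_abs_self _).trans ((abs_arctan_le _).trans (abs_of_pos (inv_pos.2 hx)).le)

lemma abs_arctan_add_arctan_lt_pi (x y : ℝ) : |arctan x + arctan y| < π := by
  rw [abs_lt]
  constructor <;> linarith [arctan_lt_pi_div_two x, neg_pi_div_two_lt_arctan x,
    arctan_lt_pi_div_two y, neg_pi_div_two_lt_arctan y]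

lemma abs_phase_le (θ : ℝ) {t : ℝ} (ht : 0 ≤ t) : |phase t θ| ≤ 2 * π * t := by
  set s := sin θ with hs_def
  set co := cos θ with hco_def
  rcases eq_or_ne s 0 with hs | hs
  · rw [phase, ← hs_def, hs, div_zero, abs_zero]
    positivity
  have hs_pos : 0 < |s| := abs_pos.2 hs
  have hs_le : |s| ≤ 1 := abs_sin_le_one θ
  have hpyth : s ^ 2 + co ^ 2 = 1 := sin_sq_add_cos_sq θ
  rw [phase, abs_div, div_le_iff₀ hs_pos]
  rcases le_or_gt (t * s * co) (1 / 2) with hsmall | hlarge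
  · have hden : 0 < 1 - t * s * co := by linarith
    have hsum : (t - co / s) * (co / s) = 1 - (1 - t * s * co) / s ^ 2 := by
      field_simp
      linear_combination (-1 : ℝ) * hpyth
    have hmerge : (t - co / s + co / s) / (1 - (t - co / s) * (co / s)) =
        t * s ^ 2 / (1 - t * s * co) := by
      rw [hsum]
      field_simp
      ring
    have hprod : (t - co / s) * (co / s) < 1 := by
      rw [hsum, sub_lt_self_iff]
      positivity
    rw [arctan_add hprod, hmerge]
    calc |arctan (t * s ^ 2 / (1 - t * s * co))| ≤ t * s ^ 2 / (1 - t * s * co) := by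
          refine (abs_arctan_le _).trans (abs_of_nonneg (by positivity)).le
      _ ≤ t * s ^ 2 / (1 / 2) := by gcongr; linarith
      _ = 2 * t * |s| * |s| := by rw [← sq_abs s]; ring
      _ ≤ 2 * t * |s| * π := by gcongr; linarith [pi_gt_three]
      _ = 2 * π * t * |s| := by ring
  · have hts : 1 ≤ 2 * t * |s| := by
      have : t * s * co ≤ t * |s| := by
        calc t * s * co ≤ |t * s * co| := le_abs_self _
          _ = t * |s| * |co| := by rw [abs_mul, abs_mul, abs_of_nonneg ht]
          _ ≤ t * |s| * 1 := by gcongr; exact abs_cos_le_one θ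
          _ = t * |s| := mul_one _
      linarith
    calc _ ≤ π := (abs_arctan_add_arctan_lt_pi _ _).le
      _ ≤ π * (2 * t * |s|) := le_mul_of_one_le_right pi_pos.le hts
      _ = 2 * π * t * |s| := by ring

lemma cos_div_sin_le_one_div {θ : ℝ} (h0 : 0 < θ) (h1 : θ < π / 2) :
    cos θ / sin θ ≤ 1 / θ := by
  rw [← inv_div, ← tan_eq_sin_div_cos, ← one_div]
  exact one_div_le_one_div_of_le h0 (le_tan h0.le h1)

lemma one_div_sub_half_le_cos_div_sin {θ : ℝ} (h0 : 0 < θ) (h1 : θ ≤ 1) :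
    1 / θ - θ / 2 ≤ cos θ / sin θ := by
  have hs : 0 < sin θ := sin_pos_of_pos_of_lt_pi h0 (by linarith [pi_gt_three])
  calc 1 / θ - θ / 2 = (1 - θ ^ 2 / 2) / θ := by field_simp
    _ ≤ (1 - θ ^ 2 / 2) / sin θ := div_le_div_of_nonneg_left (by nlinarith) hs (sin_le h0.le)
    _ ≤ cos θ / sin θ := by gcongr; exact one_sub_sq_div_two_le_cos

section RescaledAngle

variable {t σ : ℝ}

lemma rescaled_angle_bounds (ht : 0 < t) (hσ : 2 * |σ| ≤ t) :
    1 / (2 * t) ≤ 1 / t + σ / t ^ 2 ∧ 1 / t + σ / t ^ 2 ≤ 3 / (2 * t) := by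
  have hθ : 1 / t + σ / t ^ 2 = (t + σ) / t ^ 2 := by field_simp
  obtain ⟨hσl, hσu⟩ := abs_le.1 (show |σ| ≤ t / 2 by linarith)
  rw [hθ, div_le_div_iff₀ (by positivity) (by positivity),
    div_le_div_iff₀ (by positivity) (by positivity)]
  constructor <;> nlinarith

lemma cos_div_sin_rescaled_bounds (ht : 3 ≤ t) (hσ : 2 * |σ| ≤ t) :
    |t - cos (1 / t + σ / t ^ 2) / sin (1 / t + σ / t ^ 2) - σ| ≤ (2 * σ ^ 2 + 1) / t ∧
      t / 3 ≤ cos (1 / t + σ / t ^ 2) / sin (1 / t + σ / t ^ 2) := by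
  set θ := 1 / t + σ / t ^ 2 with hθ
  have ht0 : 0 < t := by linarith
  obtain ⟨hθl, hθu⟩ := rescaled_angle_bounds ht0 hσ
  have hθ0 : 0 < θ := lt_of_lt_of_le (by positivity) hθl
  have hθ1 : θ ≤ 1 / 2 :=
    hθu.trans (by rw [div_le_div_iff₀ (by positivity) (by norm_num)]; linarith)
  have hc_up := cos_div_sin_le_one_div hθ0 (by linarith [pi_gt_three])
  have hc_low := one_div_sub_half_le_cos_div_sin hθ0 (by linarith)
  obtain ⟨hσl, hσu⟩ := abs_le.1 (show |σ| ≤ t / 2 by linarith)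
  have hts : 0 < t + σ := by linarith
  have hinv : 1 / θ = t - σ + σ ^ 2 / (t + σ) := by
    rw [hθ]; field_simp; ring
  have hq0 : 0 ≤ σ ^ 2 / (t + σ) := by positivity
  have hq : σ ^ 2 / (t + σ) ≤ 2 * σ ^ 2 / t := by
    rw [div_le_div_iff₀ hts ht0]; nlinarith [sq_nonneg σ]
  have hθ2 : θ / 2 ≤ 1 / t := by
    calc θ / 2 ≤ 3 / (2 * t) / 2 := by gcongr
      _ ≤ 1 / t := by rw [div_div, div_le_div_iff₀ (by positivity) ht0]; nlinarith
  have h1t : 1 / t ≤ 1 / 3 := by gcongr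
  constructor
  · rw [abs_le, add_div]
    constructor <;> linarith
  · linarith

lemma mul_sin_rescaled_bounds (ht : 3 ≤ t) (hσ : 2 * |σ| ≤ t) :
    |1 - t * sin (1 / t + σ / t ^ 2)| ≤ (|σ| + 1) / t ∧ 1 / 3 ≤ t * sin (1 / t + σ / t ^ 2) := by
  set θ := 1 / t + σ / t ^ 2 with hθ
  have ht0 : 0 < t := by linarith
  obtain ⟨hθl, hθu⟩ := rescaled_angle_bounds ht0 hσ
  have hθ0 : 0 < θ := lt_of_lt_of_le (by positivity) hθl
  have hθt : t * θ = 1 + σ / t := by rw [hθ]; field_simp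
  have hs_up : t * sin θ ≤ t * θ := by gcongr; exact sin_le hθ0.le
  have hs_low : t * θ - t * θ ^ 3 / 6 ≤ t * sin θ := by
    have := (sin_gt_sub_cube hθ0).le
    nlinarith
  have hcube : t * θ ^ 3 / 6 ≤ 1 / (4 * t) := by
    have h3 : θ ^ 3 ≤ (3 / (2 * t)) ^ 3 := by gcongr
    rw [div_le_div_iff₀ (by norm_num) (by positivity)]
    calc t * θ ^ 3 * (4 * t) ≤ t * (3 / (2 * t)) ^ 3 * (4 * t) := by gcongr
      _ = 27 / (2 * t) := by field_simp; ring
      _ ≤ 1 * 6 := by rw [div_le_iff₀ (by positivity)]; linarith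
  have hσt_low : -(1 / 2) ≤ σ / t := by
    rw [le_div_iff₀ ht0]; linarith [neg_abs_le σ]
  have hσt_abs : |σ / t| = |σ| / t := by rw [abs_div, abs_of_pos ht0]
  obtain ⟨hl, hu⟩ := abs_le.1 (le_of_eq hσt_abs)
  have h4t : 1 / (4 * t) ≤ 1 / t := by gcongr; linarith
  have h4t' : 1 / (4 * t) ≤ 1 / 12 := by gcongr; linarith
  constructor
  · rw [abs_le, add_div]
    constructor <;> linarith
  · linarith

end RescaledAngle

lemma abs_phase_div_sub_le {t θ : ℝ} (σ : ℝ) (hc : 0 < cos θ / sin θ)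
    (hts : 1 / 3 ≤ t * sin θ) :
    |phase t θ / t - (π / 2 + arctan σ)| ≤
      |t - cos θ / sin θ - σ| + 1 / (cos θ / sin θ) + 3 * π * |1 - t * sin θ| := by
  set c := cos θ / sin θ
  set s := sin θ
  set A := arctan (t - c) + arctan c with hA_def
  have hts0 : 0 < t * s := by linarith
  have hsplit : phase t θ / t - (π / 2 + arctan σ) =
      (arctan (t - c) - arctan σ) - (π / 2 - arctan c) + A * (1 - t * s) / (t * s) := by
    have ht : t ≠ 0 := left_ne_zero_of_mul hts0.ne'
    have hs : s ≠ 0 := right_ne_zero_of_mul hts0.ne'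
    rw [show phase t θ = A / s from rfl, hA_def]
    field_simp
    ring
  have harctan := abs_arctan_sub_arctan_le (t - c) σ
  have hpi := pi_div_two_sub_arctan_le hc
  have hpi0 : 0 ≤ π / 2 - arctan c := by linarith [arctan_lt_pi_div_two c]
  have hA : |A * (1 - t * s) / (t * s)| ≤ 3 * π * |1 - t * s| := by
    rw [abs_div, abs_mul, abs_of_pos hts0, div_le_iff₀ hts0]
    calc |A| * |1 - t * s| ≤ π * |1 - t * s| := by
          gcongr; exact (abs_arctan_add_arctan_lt_pi _ _).le
      _ = 3 * π * |1 - t * s| * (1 / 3) := by ring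
      _ ≤ 3 * π * |1 - t * s| * (t * s) := by gcongr
  rw [hsplit]
  calc _ ≤ |arctan (t - c) - arctan σ - (π / 2 - arctan c)| + |A * (1 - t * s) / (t * s)| :=
        abs_add_le _ _
    _ ≤ |arctan (t - c) - arctan σ| + |π / 2 - arctan c| + |A * (1 - t * s) / (t * s)| := by
        gcongr; exact abs_sub _ _
    _ ≤ _ := by rw [abs_of_nonneg hpi0]; linarith

lemma abs_rescaled_phase_sub_le_of_three_le {t σ : ℝ} (ht : 3 ≤ t) (hσ : 2 * |σ| ≤ t) :
    |phase t (1 / t + σ / t ^ 2) / t - (π / 2 + arctan σ)| ≤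
      (2 * σ ^ 2 + 10 * |σ| + 14) / t := by
  have ht0 : 0 < t := by linarith
  obtain ⟨hcot, hc⟩ := cos_div_sin_rescaled_bounds ht hσ
  obtain ⟨hsin, hts⟩ := mul_sin_rescaled_bounds ht hσ
  have hc0 : 0 < cos (1 / t + σ / t ^ 2) / sin (1 / t + σ / t ^ 2) := by linarith
  have hinv : 1 / (cos (1 / t + σ / t ^ 2) / sin (1 / t + σ / t ^ 2)) ≤ 3 / t := by
    rw [div_le_div_iff₀ hc0 ht0]; linarith
  calc _ ≤ _ := abs_phase_div_sub_le σ hc0 hts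
    _ ≤ (2 * σ ^ 2 + 1) / t + 3 / t + 3 * π * ((|σ| + 1) / t) := by gcongr
    _ = (2 * σ ^ 2 + 4 + 3 * π * (|σ| + 1)) / t := by ring
    _ ≤ _ := div_le_div_of_nonneg_right (by nlinarith [pi_lt_d2, abs_nonneg σ]) ht0.le

lemma abs_rescaled_phase_sub_le {t σ : ℝ} (ht : 0 < t) (hσ : 2 * |σ| ≤ t) :
    |phase t (1 / t + σ / t ^ 2) / t - (π / 2 + arctan σ)| ≤
      (2 * σ ^ 2 + 10 * |σ| + 30) / t := by
  rcases le_or_gt 3 t with h3 | h3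
  · calc _ ≤ (2 * σ ^ 2 + 10 * |σ| + 14) / t := abs_rescaled_phase_sub_le_of_three_le h3 hσ
      _ ≤ _ := by gcongr; norm_num
  have hL : |π / 2 + arctan σ| ≤ π := by
    rw [abs_le]
    constructor <;> linarith [arctan_lt_pi_div_two σ, neg_pi_div_two_lt_arctan σ, pi_pos]
  have hh : |phase t (1 / t + σ / t ^ 2) / t| ≤ 2 * π := by
    rw [abs_div, abs_of_pos ht, div_le_iff₀ ht]
    exact abs_phase_le _ ht.le
  calc _ ≤ |phase t (1 / t + σ / t ^ 2) / t| + |π / 2 + arctan σ| := abs_sub _ _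
    _ ≤ 3 * π := by linarith
    _ ≤ 9 * π / t := by rw [le_div_iff₀ ht]; nlinarith [pi_pos]
    _ ≤ _ := div_le_div_of_nonneg_right (by nlinarith [pi_lt_d2, abs_nonneg σ, sq_nonneg σ])
        ht.le

theorem rescaled_phase_convergence :
    (∀ σ : ℝ,
      Filter.Tendsto (fun t : ℝ =>
          (Real.arctan (t - Real.cos (1 / t + σ / t ^ 2) / Real.sin (1 / t + σ / t ^ 2)) +
            Real.arctan (Real.cos (1 / t + σ / t ^ 2) / Real.sin (1 / t + σ / t ^ 2))) /
            Real.sin (1 / t + σ / t ^ 2) / t)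
        Filter.atTop (nhds (Real.pi / 2 + Real.arctan σ))) ∧
    ∀ δ : ℝ, 0 < δ → ∃ C : ℝ, ∀ t : ℝ, 2 / δ ≤ t → ∀ σ : ℝ, |σ| ≤ 1 / δ →
      |(Real.arctan (t - Real.cos (1 / t + σ / t ^ 2) / Real.sin (1 / t + σ / t ^ 2)) +
          Real.arctan (Real.cos (1 / t + σ / t ^ 2) / Real.sin (1 / t + σ / t ^ 2))) /
          Real.sin (1 / t + σ / t ^ 2) / t -
        (Real.pi / 2 + Real.arctan σ)| ≤ C / t := by
  refine ⟨fun σ => ?_, fun δ hδ => ⟨2 / δ ^ 2 + 10 / δ + 30, fun t ht σ hσ => ?_⟩⟩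
  · rw [← tendsto_sub_nhds_zero_iff]
    refine squeeze_zero_norm' (a := fun t => (2 * σ ^ 2 + 10 * |σ| + 30) / t) ?_
      (tendsto_const_nhds.div_atTop tendsto_id)
    filter_upwards [eventually_gt_atTop 0, eventually_ge_atTop (2 * |σ|)] with t ht hσ
    exact abs_rescaled_phase_sub_le ht hσ
  · have ht0 : 0 < t := lt_of_lt_of_le (by positivity) ht
    have hσt : 2 * |σ| ≤ t := by
      calc 2 * |σ| ≤ 2 * (1 / δ) := by gcongr
        _ = 2 / δ := by ring
        _ ≤ t := ht
    have hσ2 : σ ^ 2 ≤ 1 / δ ^ 2 := by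
      rw [← sq_abs, one_div, ← inv_pow, ← one_div]
      gcongr
    calc _ ≤ (2 * σ ^ 2 + 10 * |σ| + 30) / t := abs_rescaled_phase_sub_le ht0 hσt
      _ ≤ (2 * (1 / δ ^ 2) + 10 * (1 / δ) + 30) / t := by gcongr
      _ = _ := by ring
end
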